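/- For every δ ∈ [0, 1/2] and every R1 ∈ [0, 1], the supremum over α ∈ [0, 1] of the quantity α − h2(δ ⋆ h2⁻¹(max{α, R1} − R1)) equals 1 − h2(δ ⋆ h2⁻¹(1 − R1)), and this supremum is attained at α = 1. -/
import Mathlib

open MeasureTheory

/-- Binary entropy function (base 2), with the convention `0 * log₂ 0 = 0`
(automatic since `Real.logb 2 0 = 0`). -/
noncomputable def h2 (p : ℝ) : ℝ :=
  -(p * Real.logb 2 p) - (1 - p) * Real.logb 2 (1 - p)

/-- Inverse of the binary entropy function: for `q ≥ 0`, the unique `r ∈ [0, 1/2]`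
with `h2 r = q` (realized as the infimum of the solution set); `0` for `q < 0`. -/
noncomputable def h2inv (q : ℝ) : ℝ :=
  if q < 0 then 0 else sInf {r : ℝ | 0 ≤ r ∧ r ≤ 1 / 2 ∧ h2 r = q}

/-- Binary convolution `a ⋆ b = a(1-b) + (1-a)b`. -/
def bconv (a b : ℝ) : ℝ := a * (1 - b) + (1 - a) * b

lemma h2_eq (p : ℝ) : h2 p = Real.binEntropy p / Real.log 2 := by
  simp only [h2, Real.binEntropy, Real.logb, Real.log_inv]
  ring

lemma h2_zero : h2 0 = 0 := by simp [h2_eq]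

lemma h2_half : h2 (1 / 2) = 1 := by
  rw [h2_eq, show (1:ℝ)/2 = 2⁻¹ by norm_num, Real.binEntropy_two_inv,
    div_self (ne_of_gt (Real.log_pos one_lt_two))]

lemma h2_continuous : Continuous h2 := by
  have : h2 = fun p => Real.binEntropy p / Real.log 2 := funext h2_eq
  rw [this]
  exact Real.binEntropy_continuous.div_const _

lemma h2_strictMonoOn : StrictMonoOn h2 (Set.Icc 0 (1 / 2)) := by
  intro x hx y hy hxy
  rw [h2_eq, h2_eq]
  have h2pos : (0 : ℝ) < Real.log 2 := Real.log_pos (by norm_num)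
  exact (div_lt_div_iff_of_pos_right h2pos).mpr
    (Real.binEntropy_strictMonoOn (by simpa using hx) (by simpa using hy) hxy)

/-- Specification of `h2inv` on `[0,1]`. -/
lemma h2inv_spec {q : ℝ} (h0 : 0 ≤ q) (h1 : q ≤ 1) :
    0 ≤ h2inv q ∧ h2inv q ≤ 1 / 2 ∧ h2 (h2inv q) = q := by
  obtain ⟨r, hr, hrq⟩ : ∃ r ∈ Set.Icc (0 : ℝ) (1 / 2), h2 r = q := by
    have := intermediate_value_Icc (by norm_num : (0:ℝ) ≤ 1/2)
      (h2_continuous.continuousOn (s := Set.Icc 0 (1/2)))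
    rw [h2_zero, h2_half] at this
    exact this ⟨h0, h1⟩
  have hset : {x : ℝ | 0 ≤ x ∧ x ≤ 1 / 2 ∧ h2 x = q} = {r} := by
    ext x
    simp only [Set.mem_setOf_eq, Set.mem_singleton_iff]
    constructor
    · rintro ⟨hx0, hx2, hxq⟩
      exact h2_strictMonoOn.injOn ⟨hx0, hx2⟩ hr (hxq.trans hrq.symm)
    · rintro rfl; exact ⟨hr.1, hr.2, hrq⟩
  have : h2inv q = r := by
    rw [h2inv, if_neg (not_lt.mpr h0), hset, csInf_singleton]
  rw [this]
  exact ⟨hr.1, hr.2, hrq⟩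

lemma bconv_mem {δ t : ℝ} (hδ0 : 0 ≤ δ) (hδ2 : δ ≤ 1 / 2)
    (ht0 : 0 ≤ t) (ht2 : t ≤ 1 / 2) :
    t ≤ bconv δ t ∧ bconv δ t ≤ 1 / 2 := by
  simp only [bconv]
  constructor <;> nlinarith

/-- Key lemma: `t ↦ binEntropy t - binEntropy (bconv δ t)` is monotone on `[0, 1/2]`. -/
lemma key_mono {δ : ℝ} (hδ0 : 0 ≤ δ) (hδ2 : δ ≤ 1 / 2) :
    MonotoneOn (fun t => Real.binEntropy t - Real.binEntropy (bconv δ t))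
      (Set.Icc 0 (1 / 2)) := by
  have hderiv : ∀ x ∈ Set.Ioo (0:ℝ) (1/2),
      HasDerivAt (fun t => Real.binEntropy t - Real.binEntropy (bconv δ t))
        ((Real.log (1 - x) - Real.log x)
          - (Real.log (1 - bconv δ x) - Real.log (bconv δ x)) * (1 - 2 * δ)) x := by
    intro x hx
    have hx0 : 0 < x := hx.1
    have hx2 : x < 1 / 2 := hx.2
    have hu := bconv_mem hδ0 hδ2 hx0.le hx2.le
    have hu0 : 0 < bconv δ x := lt_of_lt_of_le hx0 hu.1
    have hu1 : bconv δ x < 1 := lt_of_le_of_lt hu.2 (by norm_num)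
    have h1 : HasDerivAt Real.binEntropy (Real.log (1 - x) - Real.log x) x :=
      Real.hasDerivAt_binEntropy hx0.ne' (by linarith)
    have h2' : HasDerivAt Real.binEntropy
        (Real.log (1 - bconv δ x) - Real.log (bconv δ x)) (bconv δ x) :=
      Real.hasDerivAt_binEntropy hu0.ne' hu1.ne
    have haff : HasDerivAt (fun t => bconv δ t) (1 - 2 * δ) x := by
      have : (fun t : ℝ => bconv δ t) = fun t => (1 - 2 * δ) * t + δ := by
        funext t; simp [bconv]; ring
      rw [this]
      simpa using ((hasDerivAt_id x).const_mul (1 - 2 * δ)).add_const δ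
    exact h1.sub (h2'.comp x haff)
  apply monotoneOn_of_deriv_nonneg (convex_Icc _ _)
  · exact (Real.binEntropy_continuous.sub
      (Real.binEntropy_continuous.comp (by unfold bconv; continuity))).continuousOn
  · intro x hx
    rw [interior_Icc] at hx
    exact ((hderiv x hx).differentiableAt).differentiableWithinAt
  · intro x hx
    rw [interior_Icc] at hx
    rw [(hderiv x hx).deriv]
    have hx0 : 0 < x := hx.1
    have hx2 : x < 1 / 2 := hx.2
    have hu := bconv_mem hδ0 hδ2 hx0.le hx2.le
    have hu0 : 0 < bconv δ x := lt_of_lt_of_le hx0 hu.1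
    set u := bconv δ x with hudef
    have hB : 0 ≤ Real.log (1 - u) - Real.log u :=
      sub_nonneg.2 (Real.log_le_log hu0 (by linarith [hu.2]))
    have hAB : Real.log (1 - u) - Real.log u ≤ Real.log (1 - x) - Real.log x := by
      have h1 : Real.log (1 - u) ≤ Real.log (1 - x) :=
        Real.log_le_log (by linarith [hu.2]) (by linarith [hu.1])
      have h2'' : Real.log x ≤ Real.log u := Real.log_le_log hx0 hu.1
      linarith
    have hmul : (Real.log (1 - u) - Real.log u) * (1 - 2 * δ)
        ≤ (Real.log (1 - u) - Real.log u) * 1 :=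
      mul_le_mul_of_nonneg_left (by linarith) hB
    nlinarith

/-- The transfer inequality in terms of `h2`. -/
lemma key_ineq {δ r s : ℝ} (hδ0 : 0 ≤ δ) (hδ2 : δ ≤ 1 / 2)
    (hr : r ∈ Set.Icc (0:ℝ) (1/2)) (hs : s ∈ Set.Icc (0:ℝ) (1/2)) (hrs : r ≤ s) :
    h2 (bconv δ s) - h2 (bconv δ r) ≤ h2 s - h2 r := by
  have := key_mono hδ0 hδ2 hr hs hrs
  simp only at this
  have hlog : (0 : ℝ) < Real.log 2 := Real.log_pos (by norm_num)
  rw [h2_eq, h2_eq, h2_eq, h2_eq, div_sub_div_same, div_sub_div_same,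
    div_le_div_iff_of_pos_right hlog]
  linarith

/-- For every `δ ∈ [0,1/2]` and `R1 ∈ [0,1]`, the supremum over `α ∈ [0,1]` of
`α − h2(δ ⋆ h2⁻¹(max{α, R1} − R1))` equals `1 − h2(δ ⋆ h2⁻¹(1 − R1))`,
attained at `α = 1`. -/
theorem stmt5 (δ R1 : ℝ) (hδ : δ ∈ Set.Icc (0 : ℝ) (1 / 2))
    (hR1 : R1 ∈ Set.Icc (0 : ℝ) 1)
    (F : ℝ → ℝ)
    (hF : F = fun α => α - h2 (bconv δ (h2inv (max α R1 - R1)))) :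
    IsGreatest (F '' Set.Icc (0 : ℝ) 1) (1 - h2 (bconv δ (h2inv (1 - R1)))) ∧
    F 1 = 1 - h2 (bconv δ (h2inv (1 - R1))) := by
  obtain ⟨hδ0, hδ2⟩ := hδ
  obtain ⟨hR0, hR1'⟩ := hR1
  have hF1 : F 1 = 1 - h2 (bconv δ (h2inv (1 - R1))) := by
    rw [hF]
    simp only
    rw [max_eq_left hR1']
  refine ⟨⟨⟨1, by norm_num, hF1⟩, ?_⟩, hF1⟩
  rintro _ ⟨α, hα, rfl⟩
  obtain ⟨hα0, hα1⟩ := hα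
  set x := max α R1 - R1 with hxdef
  set y := 1 - R1 with hydef
  have hx0 : 0 ≤ x := by rw [hxdef]; simp
  have hxy : x ≤ y := by
    have : max α R1 ≤ 1 := max_le hα1 hR1'
    rw [hxdef, hydef]; linarith
  have hy1 : y ≤ 1 := by rw [hydef]; linarith
  have hy0 : 0 ≤ y := by rw [hydef]; linarith
  obtain ⟨hr0, hr2, hrx⟩ := h2inv_spec hx0 (le_trans hxy hy1)
  obtain ⟨hs0, hs2, hsy⟩ := h2inv_spec hy0 hy1
  have hrs : h2inv x ≤ h2inv y := by
    by_contra h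
    push_neg at h
    have := h2_strictMonoOn ⟨hs0, hs2⟩ ⟨hr0, hr2⟩ h
    rw [hrx, hsy] at this
    linarith
  have hkey := key_ineq hδ0 hδ2 ⟨hr0, hr2⟩ ⟨hs0, hs2⟩ hrs
  rw [hrx, hsy] at hkey
  rw [hF]
  simp only
  have hαle : α ≤ x + R1 := by
    rw [hxdef]
    have := le_max_left α R1
    linarith
  linarith
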